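/- arXiv:2411.16315 — 2 statements merged into one kernel-verified Lean document; each statement's English description precedes it below -/
import Mathlib

section
/- Let M be a MAG over V = {X, Y} ∪ O satisfying the pretreatment setup. If there exist a vertex S ∈ MB(X) \ {Y} and a set Z ⊆ MB(Y) \ {X} such that S and Y are m-connected given Z and S and Y are m-separated by Z ∪ {X}, then M contains the directed edge X → Y (so X has a causal effect on Y) and Z blocks every non-causal path from X to Y in M, i.e., Z is an adjustment set within the Markov blanket relative to (X, Y). (Theorem 2: soundness of rule R1.) -/
namespace CausalGraph

/-- A directed mixed graph: directed edges `dir a b` (a → b) and bidirected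
edges `bidir a b` (a ↔ b), with at most one edge between any two vertices
and no self-loops. -/
structure MixedGraph (V : Type*) where
  dir : V → V → Prop
  bidir : V → V → Prop
  bidir_symm : ∀ a b, bidir a b → bidir b a
  dir_irrefl : ∀ a, ¬ dir a a
  bidir_irrefl : ∀ a, ¬ bidir a a
  dir_not_dir : ∀ a b, dir a b → ¬ dir b a
  dir_not_bidir : ∀ a b, dir a b → ¬ bidir a b

variable {V : Type*}

/-- Two vertices are adjacent if there is an edge (of any kind) between them. -/
def MixedGraph.adj (G : MixedGraph V) (a b : V) : Prop :=
  G.dir a b ∨ G.dir b a ∨ G.bidir a b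

/-- There is an edge between `a` and `b` with an arrowhead at `b`. -/
def ArrowInto (G : MixedGraph V) (a b : V) : Prop :=
  G.dir a b ∨ G.bidir a b

/-- `p` is a path between `a` and `b`: a list of distinct vertices, each
consecutive pair adjacent, starting at `a` and ending at `b`. -/
def IsPathBetween (G : MixedGraph V) (p : List V) (a b : V) : Prop :=
  List.Chain' G.adj p ∧ p.Nodup ∧ p.head? = some a ∧ p.getLast? = some b ∧ 2 ≤ p.length

/-- `p` is a directed path from `a` to `b`: all edges are directed edges
pointing toward `b`. -/
def IsDirectedPath (G : MixedGraph V) (p : List V) (a b : V) : Prop :=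
  List.Chain' G.dir p ∧ p.Nodup ∧ p.head? = some a ∧ p.getLast? = some b ∧ 2 ≤ p.length

/-- `a` is an ancestor of `b` (and `b` a descendant of `a`): `a = b` or there
is a directed path from `a` to `b`. -/
def Ancestor (G : MixedGraph V) (a b : V) : Prop :=
  a = b ∨ ∃ p, IsDirectedPath G p a b

/-- `w` is an intermediate (non-endpoint) vertex of the path `p`. -/
def IsIntermediateOn (p : List V) (w : V) : Prop :=
  ∃ (u v : V) (l₁ l₂ : List V), p = l₁ ++ u :: w :: v :: l₂

/-- `w` is a collider on the path `p`: both edges of the path at `w` have an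
arrowhead at `w`. -/
def IsColliderOn (G : MixedGraph V) (p : List V) (w : V) : Prop :=
  ∃ (u v : V) (l₁ l₂ : List V), p = l₁ ++ u :: w :: v :: l₂ ∧
    ArrowInto G u w ∧ ArrowInto G v w

/-- `w` is a non-collider intermediate vertex on the path `p`. -/
def IsNonColliderOn (G : MixedGraph V) (p : List V) (w : V) : Prop :=
  IsIntermediateOn p w ∧ ¬ IsColliderOn G p w

/-- The path `p` between `a` and `b` (with `a, b ∉ Z`) is m-connecting given
`Z`: every non-collider on it is not in `Z`, and every collider on it has a
descendant in `Z`. -/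
def MConnPath (G : MixedGraph V) (Z : Set V) (p : List V) (a b : V) : Prop :=
  IsPathBetween G p a b ∧ a ∉ Z ∧ b ∉ Z ∧
    (∀ w, IsNonColliderOn G p w → w ∉ Z) ∧
    (∀ w, IsColliderOn G p w → ∃ d ∈ Z, Ancestor G w d)

/-- `a` and `b` are m-separated by `Z`: no path between them is m-connecting
given `Z`. -/
def MSep (G : MixedGraph V) (Z : Set V) (a b : V) : Prop :=
  ∀ p, ¬ MConnPath G Z p a b

/-- `a` and `b` are m-connected given `Z`. -/
def MConn (G : MixedGraph V) (Z : Set V) (a b : V) : Prop :=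
  ∃ p, MConnPath G Z p a b

/-- Set version of m-separation: every vertex of `A` is m-separated from every
vertex of `B` by `Z`. -/
def MSepSets (G : MixedGraph V) (Z A B : Set V) : Prop :=
  ∀ a ∈ A, ∀ b ∈ B, MSep G Z a b

/-- `G` is a maximal ancestral graph (MAG): it is ancestral (no directed or
almost directed cycles), and every pair of distinct non-adjacent vertices is
m-separated by some set of vertices. -/
def IsMAG (G : MixedGraph V) : Prop :=
  (∀ a b, G.dir a b → ¬ Ancestor G b a) ∧
  (∀ a b, G.bidir a b → ¬ Ancestor G a b) ∧
  (∀ a b, a ≠ b → ¬ G.adj a b → ∃ Z : Set V, a ∉ Z ∧ b ∉ Z ∧ MSep G Z a b)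

/-- `p` is a collider path between `a` and `b`: every intermediate vertex is a
collider on it. -/
def IsColliderPathBetween (G : MixedGraph V) (p : List V) (a b : V) : Prop :=
  IsPathBetween G p a b ∧ ∀ w, IsIntermediateOn p w → IsColliderOn G p w

/-- The Markov blanket of `y`: all vertices adjacent to `y`, together with all
vertices non-adjacent to `y` joined to `y` by a collider path. -/
def MarkovBlanket (G : MixedGraph V) (y : V) : Set V :=
  {v | v ≠ y ∧ (G.adj v y ∨ (¬ G.adj v y ∧ ∃ p, IsColliderPathBetween G p v y))}

/-- The directed edge `x → y` is visible: there is a vertex `s` not adjacent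
to `y` such that either there is an edge between `s` and `x` with an arrowhead
at `x`, or there is a collider path from `s` to `x` with an arrowhead at `x`
all of whose intermediate vertices are parents of `y`. -/
def VisibleEdge (G : MixedGraph V) (x y : V) : Prop :=
  G.dir x y ∧ ∃ s, s ≠ y ∧ ¬ G.adj s y ∧
    (ArrowInto G s x ∨
      ∃ p, IsColliderPathBetween G p s x ∧
        (∃ (l : List V) (u : V), p = l ++ [u, x] ∧ ArrowInto G u x) ∧
        (∀ w, IsIntermediateOn p w → G.dir w y))

/-- A non-causal path from `x` to `y`: a path between `x` and `y` that is not
a directed path from `x` to `y`. -/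
def NonCausalPath (G : MixedGraph V) (p : List V) (a b : V) : Prop :=
  IsPathBetween G p a b ∧ ¬ IsDirectedPath G p a b

/-- `Z` blocks every non-causal path from `x` to `y`. -/
def BlocksAllNonCausal (G : MixedGraph V) (x y : V) (Z : Set V) : Prop :=
  ∀ p, NonCausalPath G p x y → ¬ MConnPath G Z p x y

/-- `Z` satisfies the generalized adjustment criterion relative to `(x, y)`:
every directed path from `x` to `y` starts with a visible directed edge out of
`x`, `Z` contains no descendant of any vertex lying on a directed path from
`x` to `y`, and `Z` blocks every non-causal path from `x` to `y`. -/
def ValidAdjustment (G : MixedGraph V) (x y : V) (Z : Set V) : Prop :=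
  (∀ (p : List V) (w : V) (l : List V),
      IsDirectedPath G p x y → p = x :: w :: l → VisibleEdge G x w) ∧
  (∀ v ∈ Z, ¬ ∃ (w : V) (p : List V), IsDirectedPath G p x y ∧ w ∈ p ∧ Ancestor G w v) ∧
  BlocksAllNonCausal G x y Z

/-- Pretreatment setup: `G` is a MAG over `V = {x, y} ∪ O`, `x ≠ y`, `y` is
not an ancestor of `x`, and neither `x` nor `y` is an ancestor of any vertex
of `O`. -/
structure Pretreatment (G : MixedGraph V) (x y : V) (O : Set V) : Prop where
  mag : IsMAG G
  ne : x ≠ y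
  x_not_mem : x ∉ O
  y_not_mem : y ∉ O
  cover : (Set.univ : Set V) = {x, y} ∪ O
  y_not_anc_x : ¬ Ancestor G y x
  x_not_anc_O : ∀ v ∈ O, ¬ Ancestor G x v
  y_not_anc_O : ∀ v ∈ O, ¬ Ancestor G y v


/-! ### Auxiliary machinery -/

section Aux

variable {G : MixedGraph V}

lemma anc_refl (G : MixedGraph V) (a : V) : Ancestor G a a := Or.inl rfl

lemma anc_of_dir {a b : V} (h : G.dir a b) : Ancestor G a b := by
  have hne : a ≠ b := fun he => G.dir_irrefl a (he ▸ h)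
  exact Or.inr ⟨[a, b], by simp [List.Chain', List.isChain_cons_cons, h], by simp [hne], rfl, rfl, by simp⟩

lemma two_le_length {W : List V} {a b : V} (ha : W.head? = some a)
    (hb : W.getLast? = some b) (hab : a ≠ b) : 2 ≤ W.length := by
  match W with
  | [] => simp at ha
  | [z] => simp_all
  | z :: w :: t => simp only [List.length_cons]; omega

lemma head?_append_left {X : List V} (Y : List V) (h : X ≠ []) :
    (X ++ Y).head? = X.head? := by
  cases X with
  | nil => simp at h
  | cons a X => rfl

lemma head?_splice (A B C : List V) (v : V) :
    (A ++ v :: C).head? = (A ++ v :: B ++ v :: C).head? := by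
  cases A <;> rfl

lemma getLast?_splice (A B C : List V) (v : V) :
    (A ++ v :: C).getLast? = (A ++ v :: B ++ v :: C).getLast? := by
  cases C with
  | nil =>
      rw [show A ++ v :: B ++ v :: ([] : List V) = (A ++ v :: B) ++ [v] by simp,
        List.getLast?_concat, List.getLast?_concat]
  | cons c C' =>
      rw [show A ++ v :: c :: C' = (A ++ [v]) ++ (c :: C') by simp,
        show A ++ v :: B ++ v :: c :: C' = (A ++ v :: B ++ [v]) ++ (c :: C') by simp,
        List.getLast?_append_of_ne_nil _ (by simp),
        List.getLast?_append_of_ne_nil _ (by simp)]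

lemma chain'_splice {R : V → V → Prop} {A B C : List V} {v : V}
    (h : List.Chain' R (A ++ v :: B ++ v :: C)) : List.Chain' R (A ++ v :: C) := by
  have hvC : List.Chain' R (v :: C) := h.suffix ⟨A ++ v :: B, by simp⟩
  rw [show A ++ v :: C = (A ++ [v]) ++ C by simp, List.Chain', List.isChain_append]
  refine ⟨h.prefix ⟨B ++ v :: C, by simp⟩, hvC.tail, ?_⟩
  intro x hx y hy
  rw [List.getLast?_concat] at hx
  simp only [Option.mem_def, Option.some.injEq] at hx
  subst hx
  exact (List.isChain_cons.mp hvC).1 y hy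

lemma not_nodup_decomp {l : List V} (h : ¬ l.Nodup) :
    ∃ (v : V) (A B C : List V), l = A ++ v :: B ++ v :: C := by
  induction l with
  | nil => simp at h
  | cons x l ih =>
      by_cases hx : x ∈ l
      · obtain ⟨s, t, rfl⟩ := List.append_of_mem hx
        exact ⟨x, [], s, t, by simp⟩
      · have hnl : ¬ l.Nodup := fun hn => h (List.nodup_cons.mpr ⟨hx, hn⟩)
        obtain ⟨v, A, B, C, rfl⟩ := ih hnl
        exact ⟨v, x :: A, B, C, rfl⟩

lemma rel_of_chain'_decomp {R : V → V → Prop} {p l₁ l₂ : List V} {a b : V}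
    (h : List.Chain' R p) (hp : p = l₁ ++ a :: b :: l₂) : R a b := by
  subst hp
  have hsuf : List.Chain' R (a :: b :: l₂) := h.suffix ⟨l₁, rfl⟩
  exact (List.isChain_cons_cons.mp hsuf).1

lemma dwalk_anc (G : MixedGraph V) : ∀ (n : ℕ) (W : List V) (a b : V), W.length ≤ n →
    List.Chain' G.dir W → W.head? = some a → W.getLast? = some b → Ancestor G a b := by
  intro n
  induction n with
  | zero =>
      intro W a b hl _ ha _
      match W, hl with
      | [], _ => simp at ha
  | succ n ih =>
      intro W a b hlen hc ha hb
      by_cases hab : a = b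
      · exact Or.inl hab
      by_cases hnd : W.Nodup
      · exact Or.inr ⟨W, hc, hnd, ha, hb, two_le_length ha hb hab⟩
      · obtain ⟨v, A, B, C, rfl⟩ := not_nodup_decomp hnd
        refine ih (A ++ v :: C) a b ?_ (chain'_splice hc)
          ((head?_splice A B C v).trans ha) ((getLast?_splice A B C v).trans hb)
        simp only [List.length_append, List.length_cons] at hlen ⊢
        omega

lemma anc_trans {a b c : V} (h1 : Ancestor G a b) (h2 : Ancestor G b c) :
    Ancestor G a c := by
  rcases h1 with rfl | ⟨p, hp⟩
  · exact h2
  rcases h2 with rfl | ⟨q, hq⟩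
  · exact Or.inr ⟨p, hp⟩
  obtain ⟨hpc, hpn, hpa, hpb, hpl⟩ := hp
  obtain ⟨hqc, hqn, hqa, hqb, hql⟩ := hq
  match q, hqa, hql with
  | b' :: q', hqa', hql' =>
    have hb' : b' = b := by simpa using hqa'
    subst hb'
    have hq'ne : q' ≠ [] := by
      cases q' with
      | nil => simp at hql'
      | cons _ _ => simp
    have hpne : p ≠ [] := by
      cases p with
      | nil => simp at hpa
      | cons _ _ => simp
    refine dwalk_anc G (p ++ q').length (p ++ q') a c le_rfl ?_ ?_ ?_
    · rw [List.Chain', List.isChain_append]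
      refine ⟨hpc, hqc.tail, ?_⟩
      intro x hx y hy
      rw [hpb] at hx
      simp only [Option.mem_def, Option.some.injEq] at hx
      subst hx
      exact (List.isChain_cons.mp hqc).1 y hy
    · rw [head?_append_left _ hpne]; exact hpa
    · rw [List.getLast?_append_of_ne_nil _ hq'ne]
      rw [show b' :: q' = [b'] ++ q' from rfl, List.getLast?_append_of_ne_nil _ hq'ne] at hqb
      exact hqb

end Aux


section Aux2

variable {G : MixedGraph V}

/-- The m-connection condition for a triple `u - w - v` on a walk. -/
def Cond (G : MixedGraph V) (Z' : Set V) (u w v : V) : Prop :=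
  ((ArrowInto G u w ∧ ArrowInto G v w) → ∃ d ∈ Z', Ancestor G w d) ∧
  (¬ (ArrowInto G u w ∧ ArrowInto G v w) → w ∉ Z')

/-- Positional m-connection conditions along a walk. -/
def WalkOK (G : MixedGraph V) (Z' : Set V) (W : List V) : Prop :=
  ∀ u w v (l₁ l₂ : List V), W = l₁ ++ u :: w :: v :: l₂ → Cond G Z' u w v

lemma triple_cases : ∀ (A B m₁ m₂ : List V) (a c b : V),
    A ++ B = m₁ ++ a :: c :: b :: m₂ →
    (∃ t, A = m₁ ++ a :: c :: b :: t) ∨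
    (A = m₁ ++ [a, c] ∧ B = b :: m₂) ∨
    (A = m₁ ++ [a] ∧ B = c :: b :: m₂) ∨
    (∃ s, B = s ++ a :: c :: b :: m₂) := by
  intro A
  induction A with
  | nil =>
      intro B m₁ m₂ a c b h
      exact Or.inr (Or.inr (Or.inr ⟨m₁, by simpa using h⟩))
  | cons x A ih =>
      intro B m₁ m₂ a c b h
      cases m₁ with
      | cons y m₁' =>
          simp only [List.cons_append, List.cons.injEq] at h
          obtain ⟨rfl, h'⟩ := h
          rcases ih B m₁' m₂ a c b h' with ⟨t, ht⟩ | ⟨h1, h2⟩ | ⟨h1, h2⟩ | hs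
          · exact Or.inl ⟨t, by simp [ht]⟩
          · exact Or.inr (Or.inl ⟨by simp [h1], h2⟩)
          · exact Or.inr (Or.inr (Or.inl ⟨by simp [h1], h2⟩))
          · exact Or.inr (Or.inr (Or.inr hs))
      | nil =>
          simp only [List.nil_append, List.cons_append, List.cons.injEq] at h
          obtain ⟨rfl, h'⟩ := h
          cases A with
          | nil =>
              simp only [List.nil_append] at h'
              exact Or.inr (Or.inr (Or.inl ⟨rfl, h'⟩))
          | cons x2 A2 =>
              simp only [List.cons_append, List.cons.injEq] at h'
              obtain ⟨rfl, h''⟩ := h'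
              cases A2 with
              | nil =>
                  simp only [List.nil_append] at h''
                  exact Or.inr (Or.inl ⟨rfl, h''⟩)
              | cons x3 A3 =>
                  simp only [List.cons_append, List.cons.injEq] at h''
                  obtain ⟨rfl, _⟩ := h''
                  exact Or.inl ⟨A3, rfl⟩

lemma append_cons_unique : ∀ (A A' X X' : List V) (w : V), w ∉ A → w ∉ A' →
    A ++ w :: X = A' ++ w :: X' → A = A' ∧ X = X' := by
  intro A
  induction A with
  | nil =>
      intro A' X X' w _ hA' h
      cases A' with
      | nil => simpa using h
      | cons y A'' =>
          exfalso
          simp only [List.nil_append, List.cons_append, List.cons.injEq] at h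
          exact hA' (h.1 ▸ List.mem_cons_self)
  | cons x A ih =>
      intro A' X X' w hA hA' h
      cases A' with
      | nil =>
          exfalso
          simp only [List.cons_append, List.nil_append, List.cons.injEq] at h
          exact hA (h.1 ▸ List.mem_cons_self)
      | cons y A'' =>
          simp only [List.cons_append, List.cons.injEq] at h
          obtain ⟨rfl, h'⟩ := h
          obtain ⟨h1, h2⟩ := ih A'' X X' w (fun hm => hA (List.mem_cons_of_mem _ hm))
            (fun hm => hA' (List.mem_cons_of_mem _ hm)) h'
          exact ⟨by rw [h1], h2⟩

lemma decomp_unique {p l₁ l₂ l₁' l₂' : List V} {u w v u' v' : V} (hnd : p.Nodup)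
    (h1 : p = l₁ ++ u :: w :: v :: l₂) (h2 : p = l₁' ++ u' :: w :: v' :: l₂') :
    u = u' ∧ v = v' := by
  have e : (l₁ ++ [u]) ++ w :: v :: l₂ = (l₁' ++ [u']) ++ w :: v' :: l₂' := by
    rw [List.append_assoc, List.append_assoc, List.singleton_append,
      List.singleton_append, ← h1, ← h2]
  have hw : w ∉ l₁ ++ [u] := by
    intro hm
    have hnd2 : ((l₁ ++ [u]) ++ w :: v :: l₂).Nodup := by
      rw [show (l₁ ++ [u]) ++ w :: v :: l₂ = l₁ ++ u :: w :: v :: l₂ by simp, ← h1]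
      exact hnd
    exact (List.disjoint_of_nodup_append hnd2) hm List.mem_cons_self
  have hw' : w ∉ l₁' ++ [u'] := by
    intro hm
    have hnd2 : ((l₁' ++ [u']) ++ w :: v' :: l₂').Nodup := by
      rw [show (l₁' ++ [u']) ++ w :: v' :: l₂' = l₁' ++ u' :: w :: v' :: l₂' by simp, ← h2]
      exact hnd
    exact (List.disjoint_of_nodup_append hnd2) hm List.mem_cons_self
  obtain ⟨hAA, hX⟩ := append_cons_unique _ _ _ _ _ hw hw' e
  constructor
  · simpa using List.append_inj_right' hAA rfl
  · simp only [List.cons.injEq] at hX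
    exact hX.1

lemma last_two_eq {l l' : List V} {a b a' b' : V} (h : l ++ [a, b] = l' ++ [a', b']) :
    a = a' ∧ b = b' := by
  have h2 := congrArg List.getLast? h
  rw [show l ++ [a, b] = (l ++ [a]) ++ [b] by simp,
    show l' ++ [a', b'] = (l' ++ [a']) ++ [b'] by simp,
    List.getLast?_concat, List.getLast?_concat] at h2
  have hb : b = b' := by simpa using h2
  subst hb
  have h3 := congrArg List.dropLast h
  rw [show l ++ [a, b] = (l ++ [a]) ++ [b] by simp,
    show l' ++ [a', b] = (l' ++ [a']) ++ [b] by simp,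
    List.dropLast_concat, List.dropLast_concat] at h3
  exact ⟨by simpa using List.append_inj_right' h3 rfl, rfl⟩

lemma walkOK_prefix {Z' : Set V} {X Y : List V} (h : WalkOK G Z' (X ++ Y)) :
    WalkOK G Z' X := by
  intro u w v l₁ l₂ hX
  exact h u w v l₁ (l₂ ++ Y) (by rw [hX]; simp)

lemma walkOK_of_mconn {Z' : Set V} {p : List V} {a b : V} (h : MConnPath G Z' p a b) :
    WalkOK G Z' p := by
  intro u w v l₁ l₂ hp
  constructor
  · intro hh
    exact h.2.2.2.2 w ⟨u, v, l₁, l₂, hp, hh.1, hh.2⟩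
  · intro hnc
    apply h.2.2.2.1 w
    refine ⟨⟨u, v, l₁, l₂, hp⟩, ?_⟩
    rintro ⟨u', v', l₁', l₂', hp', ha1, ha2⟩
    obtain ⟨hu, hv⟩ := decomp_unique h.1.2.1 hp hp'
    exact hnc ⟨hu ▸ ha1, hv ▸ ha2⟩

lemma mconn_of_walkOK {Z' : Set V} {W : List V} {a b : V} (hc : List.Chain' G.adj W)
    (hnd : W.Nodup) (ha : W.head? = some a) (hb : W.getLast? = some b)
    (hl : 2 ≤ W.length) (haZ : a ∉ Z') (hbZ : b ∉ Z') (h : WalkOK G Z' W) :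
    MConnPath G Z' W a b := by
  refine ⟨⟨hc, hnd, ha, hb, hl⟩, haZ, hbZ, ?_, ?_⟩
  · rintro w ⟨⟨u, v, l₁, l₂, hp⟩, hncol⟩
    exact (h u w v l₁ l₂ hp).2 (fun hh => hncol ⟨u, v, l₁, l₂, hp, hh.1, hh.2⟩)
  · rintro w ⟨u, v, l₁, l₂, hp, h1, h2⟩
    exact (h u w v l₁ l₂ hp).1 ⟨h1, h2⟩

lemma last_cons_nodup {l : List V} {a : V} (hnd : (a :: l).Nodup)
    (hl : (a :: l).getLast? = some a) : l = [] := by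
  cases l with
  | nil => rfl
  | cons b l' =>
      exfalso
      have h2 : (b :: l').getLast? = some a := by
        rwa [show a :: b :: l' = [a] ++ (b :: l') from rfl,
          List.getLast?_append_of_ne_nil _ (by simp)] at hl
      have ha : a ∈ b :: l' := List.mem_of_mem_getLast? (by simp [h2])
      exact (List.nodup_cons.mp hnd).1 ha

end Aux2


section Aux3

variable {G : MixedGraph V}

/-- If a walk satisfying the m-connection conditions contains a directed edge
`u → v`, then either `u` is an ancestor of `Z'`, or the walk's final edge is a
directed edge pointing to its last vertex. -/
lemma lemB {Z' : Set V} : ∀ (t l₁ : List V) (u v : V),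
    List.Chain' G.adj (l₁ ++ u :: v :: t) → WalkOK G Z' (l₁ ++ u :: v :: t) →
    G.dir u v →
    (∃ d ∈ Z', Ancestor G u d) ∨
    ∃ (l : List V) (a b : V), l₁ ++ u :: v :: t = l ++ [a, b] ∧ G.dir a b := by
  intro t
  induction t with
  | nil =>
      intro l₁ u v _ _ hd
      exact Or.inr ⟨l₁, u, v, by simp, hd⟩
  | cons c t' ih =>
      intro l₁ u v hc hok hd
      by_cases hcv : ArrowInto G c v
      · obtain ⟨d, hdZ, hanc⟩ := (hok u v c l₁ t' rfl).1 ⟨Or.inl hd, hcv⟩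
        exact Or.inl ⟨d, hdZ, anc_trans (anc_of_dir hd) hanc⟩
      · have hadj : G.adj v c := rel_of_chain'_decomp hc
          (show l₁ ++ u :: v :: c :: t' = (l₁ ++ [u]) ++ v :: c :: t' by simp)
        have hvc : G.dir v c := by
          rcases hadj with h | h | h
          · exact h
          · exact absurd (Or.inl h) hcv
          · exact absurd (Or.inr (G.bidir_symm _ _ h)) hcv
        have heq : (l₁ ++ [u]) ++ v :: c :: t' = l₁ ++ u :: v :: c :: t' := by simp
        have := ih (l₁ ++ [u]) v c (by rw [heq]; exact hc) (by rw [heq]; exact hok) hvc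
        rcases this with ⟨d, hdZ, ha⟩ | ⟨l, a, b, he, hab⟩
        · exact Or.inl ⟨d, hdZ, anc_trans (anc_of_dir hd) ha⟩
        · exact Or.inr ⟨l, a, b, by rw [← heq]; exact he, hab⟩

lemma adj_irrefl (G : MixedGraph V) (v : V) : ¬ G.adj v v := by
  rintro (h | h | h)
  · exact G.dir_irrefl v h
  · exact G.dir_irrefl v h
  · exact G.bidir_irrefl v h

lemma walkOK_splice {Z' : Set V} {A B C : List V} {v : V}
    (hc : List.Chain' G.adj (A ++ v :: B ++ v :: C))
    (hok : WalkOK G Z' (A ++ v :: B ++ v :: C)) : WalkOK G Z' (A ++ v :: C) := by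
  intro a c b m₁ m₂ hdec
  have hdec' : (A ++ [v]) ++ C = m₁ ++ a :: c :: b :: m₂ := by
    rw [List.append_assoc, List.singleton_append]; exact hdec
  rcases triple_cases (A ++ [v]) C m₁ m₂ a c b hdec' with
    ⟨t, ht⟩ | ⟨h1, h2⟩ | ⟨h1, h2⟩ | ⟨s, hs⟩
  · -- triple inside `A ++ [v]`
    apply hok a c b m₁ (t ++ (B ++ v :: C))
    rw [show A ++ v :: B ++ v :: C = (A ++ [v]) ++ (B ++ v :: C) by simp, ht]
    simp
  · -- junction case: `c = v`, `A = m₁ ++ [a]`, `C = b :: m₂`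
    have hcv : c = v := by
      have h1' : (A ++ [v] : List V) = (m₁ ++ [a]) ++ [c] := by simpa using h1
      have : v = c := by simpa using List.append_inj_right' h1' rfl
      exact this.symm
    subst hcv
    have hA : A = m₁ ++ [a] := by
      have h3 := congrArg List.dropLast h1
      rw [show m₁ ++ [a, c] = (m₁ ++ [a]) ++ [c] by simp, List.dropLast_concat,
        List.dropLast_concat] at h3
      exact h3
    subst hA
    subst h2
    cases B with
    | nil =>
        exfalso
        exact adj_irrefl G c (rel_of_chain'_decomp hc
          (show (m₁ ++ [a]) ++ c :: [] ++ c :: (b :: m₂) = (m₁ ++ [a]) ++ c :: c :: (b :: m₂)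
            by simp))
    | cons b₁ B' =>
        have cond1 : Cond G Z' a c b₁ := hok a c b₁ m₁ (B' ++ c :: b :: m₂) (by simp)
        obtain ⟨B'', b₂, he2⟩ : ∃ B'' b₂, b₁ :: B' = B'' ++ [b₂] := by
          rcases List.eq_nil_or_concat (b₁ :: B') with h | ⟨B'', b₂, h⟩
          · simp at h
          · exact ⟨B'', b₂, by simpa using h⟩
        have cond2 : Cond G Z' b₂ c b := by
          apply hok b₂ c b ((m₁ ++ [a]) ++ c :: B'') m₂
          rw [show (m₁ ++ [a]) ++ c :: b₁ :: B' ++ c :: b :: m₂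
              = (m₁ ++ [a]) ++ c :: ((b₁ :: B') ++ c :: b :: m₂) by simp, he2]
          simp
        constructor
        · rintro ⟨hav, hbv⟩
          by_cases h1' : ArrowInto G b₁ c
          · exact cond1.1 ⟨hav, h1'⟩
          by_cases h2' : ArrowInto G b₂ c
          · exact cond2.1 ⟨h2', hbv⟩
          -- both edges at the two occurrences point out of `c`
          have hdir1 : G.dir c b₁ := by
            have hadj : G.adj c b₁ := rel_of_chain'_decomp hc
              (show (m₁ ++ [a]) ++ c :: b₁ :: B' ++ c :: b :: m₂
                = (m₁ ++ [a]) ++ c :: b₁ :: (B' ++ c :: b :: m₂) by simp)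
            rcases hadj with h | h | h
            · exact h
            · exact absurd (Or.inl h) h1'
            · exact absurd (Or.inr (G.bidir_symm _ _ h)) h1'
          have hdir2 : G.dir c b₂ := by
            have hadj : G.adj b₂ c := rel_of_chain'_decomp hc
              (show (m₁ ++ [a]) ++ c :: b₁ :: B' ++ c :: b :: m₂
                = ((m₁ ++ [a]) ++ c :: B'') ++ b₂ :: c :: (b :: m₂) by
                  rw [show (m₁ ++ [a]) ++ c :: b₁ :: B' ++ c :: b :: m₂
                    = (m₁ ++ [a]) ++ c :: ((b₁ :: B') ++ c :: b :: m₂) by simp, he2]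
                  simp)
            rcases hadj with h | h | h
            · exact absurd (Or.inl h) h2'
            · exact h
            · exact absurd (Or.inr h) h2'
          -- apply lemB to the prefix walk ending at the second occurrence of c
          have hpre : ((m₁ ++ [a]) ++ c :: b₁ :: (B' ++ [c])) ++ (b :: m₂)
              = (m₁ ++ [a]) ++ c :: b₁ :: B' ++ c :: b :: m₂ := by simp
          have hcT : List.Chain' G.adj ((m₁ ++ [a]) ++ c :: b₁ :: (B' ++ [c])) := by
            apply hc.prefix
            exact ⟨b :: m₂, hpre⟩
          have hokT : WalkOK G Z' ((m₁ ++ [a]) ++ c :: b₁ :: (B' ++ [c])) := by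
            apply walkOK_prefix (Y := b :: m₂)
            rw [hpre]
            exact hok
          rcases lemB (B' ++ [c]) (m₁ ++ [a]) c b₁ (by simpa using hcT)
            (by simpa using hokT) hdir1 with hgood | ⟨l, a', b', he', hab'⟩
          · exact hgood
          · exfalso
            have he'' : l ++ [a', b'] = ((m₁ ++ [a]) ++ c :: B'') ++ [b₂, c] := by
              rw [← he']
              rw [show (m₁ ++ [a]) ++ c :: b₁ :: (B' ++ [c])
                = (m₁ ++ [a]) ++ c :: ((b₁ :: B') ++ [c]) by simp, he2]
              simp
            obtain ⟨ha', hb'⟩ := last_two_eq he''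
            subst ha'; subst hb'
            exact G.dir_not_dir _ _ hdir2 hab'
        · intro hn
          rcases not_and_or.mp hn with hn' | hn'
          · exact cond1.2 (fun hh => hn' hh.1)
          · exact cond2.2 (fun hh => hn' hh.2)
  · -- triple starts at the (second) occurrence of `v`
    have hav : a = v := by
      have : v = a := by simpa using List.append_inj_right' h1 rfl
      exact this.symm
    have hA : A = m₁ := by simpa using List.append_inj_left' h1 rfl
    subst hav; subst hA
    apply hok a c b (A ++ a :: B) m₂
    rw [h2]
  · -- triple inside `C`
    apply hok a c b (A ++ v :: B ++ v :: s) m₂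
    rw [hs]
    simp

lemma walk_to_path {Z' : Set V} : ∀ (n : ℕ) (W : List V) (a b : V), W.length ≤ n →
    List.Chain' G.adj W → W.head? = some a → W.getLast? = some b → a ≠ b →
    a ∉ Z' → b ∉ Z' → WalkOK G Z' W → ∃ p, MConnPath G Z' p a b := by
  intro n
  induction n with
  | zero =>
      intro W a b hl _ ha _
      match W, hl with
      | [], _ => simp at ha
  | succ n ih =>
      intro W a b hlen hc ha hb hab haZ hbZ hok
      by_cases hnd : W.Nodup
      · exact ⟨W, mconn_of_walkOK hc hnd ha hb (two_le_length ha hb hab) haZ hbZ hok⟩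
      · obtain ⟨v, A, B, C, rfl⟩ := not_nodup_decomp hnd
        refine ih (A ++ v :: C) a b ?_ (chain'_splice hc)
          ((head?_splice A B C v).trans ha) ((getLast?_splice A B C v).trans hb)
          hab haZ hbZ (walkOK_splice hc hok)
        simp only [List.length_append, List.length_cons] at hlen ⊢
        omega

end Aux3

/-- Theorem 2 (soundness of rule R1). -/
theorem rule_R1_sound
    {V : Type*} [Fintype V] (G : MixedGraph V) (x y : V) (O : Set V)
    (h : Pretreatment G x y O) (S : V) (Z : Set V)
    (hS : S ∈ MarkovBlanket G x \ {y})
    (hZ : Z ⊆ MarkovBlanket G y \ {x})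
    (hconn : MConn G Z S y)
    (hsep : MSep G (Z ∪ {x}) S y) :
    G.dir x y ∧ BlocksAllNonCausal G x y Z := by
  obtain ⟨hSmb, hSy0⟩ := hS
  have hSy : S ≠ y := by simpa using hSy0
  have hSx : S ≠ x := hSmb.1
  have hxy : x ≠ y := h.ne
  have hclaim : ∀ w, G.dir x w → w = y := by
    intro w hw
    have hmem : w ∈ ({x, y} : Set V) ∪ O := by rw [← h.cover]; trivial
    rcases hmem with hw' | hw'
    · simp only [Set.mem_insert_iff, Set.mem_singleton_iff] at hw'
      rcases hw' with rfl | rfl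
      · exact absurd hw (G.dir_irrefl w)
      · rfl
    · exact absurd (anc_of_dir hw) (h.x_not_anc_O w hw')
  obtain ⟨p, hp⟩ := hconn
  have hpok : WalkOK G Z p := walkOK_of_mconn hp
  obtain ⟨hpath, hSZ, hyZ, hpnc, hpcol⟩ := hp
  have hblk := hsep p
  have hxnc : IsNonColliderOn G p x := by
    by_contra hcon
    apply hblk
    refine ⟨hpath, by simp [hSZ, hSx], by simp [hyZ, Ne.symm hxy], ?_, ?_⟩
    · intro w hw hm
      rcases hm with hm | hm
      · exact hpnc w hw hm
      · have hwx : w = x := by simpa using hm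
        exact hcon (hwx ▸ hw)
    · intro w hw
      obtain ⟨d, hd, ha⟩ := hpcol w hw
      exact ⟨d, Or.inl hd, ha⟩
  obtain ⟨⟨u, v, l₁, l₂, hdecomp⟩, hnotcol⟩ := hxnc
  have hadj_ux : G.adj u x := rel_of_chain'_decomp hpath.1 hdecomp
  have hadj_xv : G.adj x v := rel_of_chain'_decomp hpath.1
    (show p = (l₁ ++ [u]) ++ x :: v :: l₂ by rw [hdecomp]; simp)
  have hnc' : ¬ (ArrowInto G u x ∧ ArrowInto G v x) := fun hh =>
    hnotcol ⟨u, v, l₁, l₂, hdecomp, hh.1, hh.2⟩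
  have hnd : p.Nodup := hpath.2.1
  have hlast : p.getLast? = some y := hpath.2.2.2.1
  have hndA : ((l₁ ++ [u, x]) ++ v :: l₂).Nodup := by
    rw [show (l₁ ++ [u, x]) ++ v :: l₂ = l₁ ++ u :: x :: v :: l₂ by simp, ← hdecomp]
    exact hnd
  have hylast : (v :: l₂).getLast? = some y := by
    have h2 := hlast
    rw [hdecomp, show l₁ ++ u :: x :: v :: l₂ = (l₁ ++ [u, x]) ++ v :: l₂ by simp,
      List.getLast?_append_of_ne_nil _ (by simp)] at h2
    exact h2
  have hu_ne : ¬ G.dir x u := by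
    intro hdxu
    have hu : u = y := hclaim u hdxu
    have hym : y ∈ v :: l₂ := List.mem_of_mem_getLast? (by simp [hylast])
    exact (List.disjoint_of_nodup_append hndA) (by simp [hu]) hym
  have hdxv : G.dir x v := by
    rcases not_and_or.mp hnc' with hna | hna
    · exfalso
      apply hu_ne
      rcases hadj_ux with h1 | h1 | h1
      · exact absurd (Or.inl h1) hna
      · exact h1
      · exact absurd (Or.inr h1) hna
    · rcases hadj_xv with h1 | h1 | h1
      · exact h1
      · exact absurd (Or.inl h1) hna
      · exact absurd (Or.inr (G.bidir_symm _ _ h1)) hna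
  have hArr_ux : ArrowInto G u x := by
    rcases hadj_ux with h1 | h1 | h1
    · exact Or.inl h1
    · exact absurd h1 hu_ne
    · exact Or.inr h1
  have hvy : v = y := hclaim v hdxv
  have hl₂ : l₂ = [] := by
    refine last_cons_nodup (List.Nodup.of_append_right hndA) ?_
    rw [hylast, hvy]
  subst hl₂
  have hdiry : G.dir x y := by rw [← hvy]; exact hdxv
  refine ⟨hdiry, ?_⟩
  intro q hq hqmc
  obtain ⟨hqpathB, hqnotdir⟩ := hq
  have hqok : WalkOK G Z q := walkOK_of_mconn hqmc
  obtain ⟨hqp, hxZ0, hyZ0, hqnc, hqcol⟩ := hqmc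
  obtain ⟨hqchain, hqnd, hqhead, hqlast, hqlen⟩ := hqp
  obtain ⟨w, t', rfl⟩ : ∃ w t', q = x :: w :: t' := by
    match q, hqhead, hqlen with
    | [z], _, hl => simp at hl
    | z :: w :: t', hh, _ =>
        have hz : z = x := by simpa using hh
        exact ⟨w, t', by rw [hz]⟩
  have hqlast' : (w :: t').getLast? = some y := by
    rw [show x :: w :: t' = [x] ++ (w :: t') from rfl,
      List.getLast?_append_of_ne_nil _ (by simp)] at hqlast
    exact hqlast
  have hadj_xw : G.adj x w := (List.isChain_cons_cons.mp hqchain).1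
  have hxq : x ∉ w :: t' := (List.nodup_cons.mp hqnd).1
  have hArr_wx : ArrowInto G w x := by
    by_contra hno
    have hdxw : G.dir x w := by
      rcases hadj_xw with h1 | h1 | h1
      · exact h1
      · exact absurd (Or.inl h1) hno
      · exact absurd (Or.inr (G.bidir_symm _ _ h1)) hno
    have hwy : w = y := hclaim w hdxw
    have ht' : t' = [] := last_cons_nodup hqnd.of_cons (by rw [hqlast', hwy])
    subst ht'
    exact hqnotdir ⟨by simp [List.Chain', List.isChain_cons_cons, hdxw], hqnd, hqhead, hqlast, by simp⟩
  have hpA : p = (l₁ ++ [u, x]) ++ [v] := by rw [hdecomp]; simp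
  have hWchain : List.Chain' G.adj (l₁ ++ u :: x :: w :: t') := by
    rw [show l₁ ++ u :: x :: w :: t' = (l₁ ++ [u, x]) ++ (w :: t') by simp,
      List.Chain', List.isChain_append]
    refine ⟨hpath.1.prefix ⟨[v], hpA.symm⟩, hqchain.tail, ?_⟩
    intro x1 hx1 y1 hy1
    rw [show l₁ ++ [u, x] = (l₁ ++ [u]) ++ [x] by simp, List.getLast?_concat] at hx1
    simp only [Option.mem_def, Option.some.injEq] at hx1 hy1
    subst hx1
    rw [List.head?_cons] at hy1
    simp only [Option.some.injEq] at hy1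
    subst hy1
    exact hadj_xw
  have hWhead : (l₁ ++ u :: x :: w :: t').head? = some S := by
    have hphead : p.head? = some S := hpath.2.2.1
    rw [hpA, head?_append_left _ (by simp)] at hphead
    rw [show l₁ ++ u :: x :: w :: t' = (l₁ ++ [u, x]) ++ (w :: t') by simp,
      head?_append_left _ (by simp)]
    exact hphead
  have hWlast : (l₁ ++ u :: x :: w :: t').getLast? = some y := by
    rw [show l₁ ++ u :: x :: w :: t' = (l₁ ++ [u, x]) ++ (w :: t') by simp,
      List.getLast?_append_of_ne_nil _ (by simp)]
    exact hqlast'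
  have hyA : v ∉ l₁ ++ [u, x] := fun hm =>
    (List.disjoint_of_nodup_append hndA) hm (by simp)
  have hWok : WalkOK G (Z ∪ {x}) (l₁ ++ u :: x :: w :: t') := by
    intro a' c' b' m₁ m₂ hdec
    have hdec' : (l₁ ++ [u, x]) ++ (w :: t') = m₁ ++ a' :: c' :: b' :: m₂ := by
      rw [show (l₁ ++ [u, x]) ++ (w :: t') = l₁ ++ u :: x :: w :: t' by simp]
      exact hdec
    rcases triple_cases _ _ _ _ _ _ _ hdec' with ⟨t0, ht0⟩ | ⟨h1, h2⟩ | ⟨h1, h2⟩ | ⟨s, hs⟩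
    · -- triple inside `p`
      have hpdec : p = m₁ ++ a' :: c' :: b' :: (t0 ++ [v]) := by
        rw [hpA, ht0]; simp
      have hcond := hpok a' c' b' m₁ (t0 ++ [v]) hpdec
      have hc'x : c' ≠ x := by
        intro hcx
        subst hcx
        obtain ⟨hu', hv'⟩ := decomp_unique hnd hdecomp hpdec
        exact hyA (by rw [hv', ht0]; simp)
      refine ⟨fun hh => ?_, fun hh => ?_⟩
      · obtain ⟨d, hd, ha⟩ := hcond.1 hh
        exact ⟨d, Or.inl hd, ha⟩
      · have hcz := hcond.2 hh
        simp [hcz, hc'x]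
    · -- junction triple `u *→ x ←* w`
      obtain ⟨hua, hxc⟩ := last_two_eq h1
      have hwb : w = b' := by
        simp only [List.cons.injEq] at h2
        exact h2.1
      subst hua; subst hxc; subst hwb
      refine ⟨fun _ => ⟨x, Set.mem_union_right _ rfl, anc_refl G x⟩, fun hh => ?_⟩
      exact absurd ⟨hArr_ux, hArr_wx⟩ hh
    · -- triple starting at `x`
      have h1' : (l₁ ++ [u]) ++ [x] = m₁ ++ [a'] := by simpa using h1
      have hax : x = a' := by simpa using List.append_inj_right' h1' (by simp)
      subst hax
      obtain ⟨hwc, ht'2⟩ : w = c' ∧ t' = b' :: m₂ := by simpa using h2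
      subst hwc
      have hcond := hqok x w b' [] m₂ (by simp [ht'2])
      refine ⟨fun hh => ?_, fun hh => ?_⟩
      · obtain ⟨d, hd, ha⟩ := hcond.1 hh
        exact ⟨d, Or.inl hd, ha⟩
      · have hcz := hcond.2 hh
        have hwx : w ≠ x := fun he => hxq (by simp [he])
        simp [hcz, hwx]
    · -- triple inside `q`
      have hcond := hqok a' c' b' (x :: s) m₂ (by simp [hs])
      have hc'm : c' ∈ w :: t' := by rw [hs]; simp
      have hc'x : c' ≠ x := fun he => hxq (he ▸ hc'm)
      refine ⟨fun hh => ?_, fun hh => ?_⟩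
      · obtain ⟨d, hd, ha⟩ := hcond.1 hh
        exact ⟨d, Or.inl hd, ha⟩
      · have hcz := hcond.2 hh
        simp [hcz, hc'x]
  obtain ⟨r, hr⟩ := walk_to_path (l₁ ++ u :: x :: w :: t').length
    (l₁ ++ u :: x :: w :: t') S y le_rfl hWchain hWhead hWlast hSy
    (by simp [hSZ, hSx]) (by simp [hyZ, Ne.symm hxy]) hWok
  exact hsep r hr

end CausalGraph
end

section
/- Let M be a MAG over V = {X, Y} ∪ O satisfying the pretreatment setup, let S ∈ O, and let Z ⊆ O \ {S}. If S and Y are m-connected given Z but S and Y are m-separated by Z ∪ {X}, then M contains the directed edge X → Y, and every m-connecting path between S and Y given Z passes through X, contains the directed edge X → Y as its final edge, and has X as a non-collider on it. -/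
namespace CausalGraph

variable {V : Type*}

lemma ancestor_of_dir (G : MixedGraph V) {a b : V} (hab : G.dir a b) : Ancestor G a b := by
  have hne : a ≠ b := fun h => G.dir_irrefl a (h ▸ hab)
  exact Or.inr ⟨[a, b], by simp [IsDirectedPath, List.Chain', hab, hne]⟩

/-- Every m-connecting path between `S` and `y` given `Z` passes through `x`,
ends with the directed edge `x → y`, and has `x` as a non-collider on it. -/
theorem mconnecting_paths_through_treatment
    {V : Type*} [Fintype V] (G : MixedGraph V) (x y : V) (O : Set V)
    (h : Pretreatment G x y O) (S : V) (Z : Set V)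
    (hS : S ∈ O) (hZ : Z ⊆ O \ {S})
    (hconn : MConn G Z S y)
    (hsep : MSep G (Z ∪ {x}) S y) :
    G.dir x y ∧ ∀ p, MConnPath G Z p S y →
      x ∈ p ∧ (∃ l : List V, p = l ++ [x, y]) ∧ IsNonColliderOn G p x := by
  have hSne : S ≠ x := fun h' => h.x_not_mem (h' ▸ hS)
  have hyne : y ≠ x := fun h' => h.ne h'.symm
  have hmemV : ∀ w : V, w = x ∨ w = y ∨ w ∈ O := by
    intro w
    have hw : w ∈ ({x, y} : Set V) ∪ O := by
      rw [← h.cover]; trivial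
    have := hw
    simp only [Set.mem_union, Set.mem_insert_iff, Set.mem_singleton_iff] at this
    tauto
  have key : ∀ p, MConnPath G Z p S y →
      G.dir x y ∧ x ∈ p ∧ (∃ l : List V, p = l ++ [x, y]) ∧ IsNonColliderOn G p x := by
    intro p hp
    obtain ⟨hpath, hSZ, hyZ, hnc, hc⟩ := hp
    -- x must be a non-collider on p, else p would m-connect given Z ∪ {x}
    have hx_nc : IsNonColliderOn G p x := by
      by_contra hxnc
      apply hsep p
      refine ⟨hpath, ?_, ?_, ?_, ?_⟩
      · rintro (h' | h')
        · exact hSZ h'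
        · exact hSne h'
      · rintro (h' | h')
        · exact hyZ h'
        · exact hyne h'
      · intro w hw
        rintro (h' | h')
        · exact hnc w hw h'
        · exact hxnc (h' ▸ hw)
      · intro w hw
        obtain ⟨d, hd, hdd⟩ := hc w hw
        exact ⟨d, Or.inl hd, hdd⟩
    obtain ⟨⟨u, v, l₁, l₂, hdecomp⟩, hncol⟩ := hx_nc
    obtain ⟨hchain, hnodup, hhead, hlast, hlen⟩ := hpath
    subst hdecomp
    -- adjacency facts
    have hinfix : [u, x, v] <:+: l₁ ++ u :: x :: v :: l₂ := ⟨l₁, l₂, by simp⟩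
    have hch3 : List.Chain' G.adj [u, x, v] := hchain.infix hinfix
    have hadj : G.adj u x ∧ G.adj x v := by
      simpa [List.Chain', List.isChain_cons_cons] using hch3
    -- nodup facts
    have hnd2 : (u :: x :: v :: l₂).Nodup := hnodup.of_append_right
    obtain ⟨hu_not, hnd3⟩ := List.nodup_cons.mp hnd2
    obtain ⟨hx_not, hnd4⟩ := List.nodup_cons.mp hnd3
    have hux : u ≠ x := fun h' => hu_not (h' ▸ List.mem_cons_self)
    have hxv : x ≠ v := fun h' => hx_not (h' ▸ List.mem_cons_self)
    -- y is the last vertex, hence in v :: l₂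
    have hlast' : (v :: l₂).getLast? = some y := by
      rw [List.getLast?_append] at hlast
      simpa using hlast
    have hy_mem : y ∈ v :: l₂ := List.mem_of_getLast? hlast'
    -- x is a non-collider: one edge at x points away from x
    have hnotboth : ¬(ArrowInto G u x ∧ ArrowInto G v x) := fun ⟨h1, h2⟩ =>
      hncol ⟨u, v, l₁, l₂, rfl, h1, h2⟩
    have hdir : G.dir x u ∨ G.dir x v := by
      by_contra hcon
      push_neg at hcon
      apply hnotboth
      constructor
      · rcases hadj.1 with h' | h' | h'
        · exact Or.inl h'
        · exact absurd h' hcon.1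
        · exact Or.inr h'
      · rcases hadj.2 with h' | h' | h'
        · exact absurd h' hcon.2
        · exact Or.inl h'
        · exact Or.inr (G.bidir_symm _ _ h')
    -- the forward edge must be x → y
    have hvy : G.dir x v ∧ v = y := by
      rcases hdir with hxu | hxv'
      · exfalso
        have huy : u ≠ y := by
          intro h'
          exact hu_not (h' ▸ List.mem_cons_of_mem _ hy_mem)
        rcases hmemV u with h' | h' | h'
        · exact hux h'
        · exact huy h'
        · exact h.x_not_anc_O u h' (ancestor_of_dir G hxu)
      · refine ⟨hxv', ?_⟩
        rcases hmemV v with h' | h' | h'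
        · exact absurd h'.symm hxv
        · exact h'
        · exact absurd (ancestor_of_dir G hxv') (h.x_not_anc_O v h')
    obtain ⟨hdxy, hveq⟩ := hvy
    subst v
    -- since y is last and the list is nodup, l₂ = []
    have hl2 : l₂ = [] := by
      cases l₂ with
      | nil => rfl
      | cons a t =>
        exfalso
        have h1 : (a :: t).getLast? = some y := by
          rw [List.getLast?_cons_cons] at hlast'
          exact hlast'
        have h2 : y ∈ a :: t := List.mem_of_getLast? h1
        exact (List.nodup_cons.mp hnd4).1 h2
    subst hl2
    refine ⟨hdxy, by simp, ⟨l₁ ++ [u], by simp⟩, ⟨u, y, l₁, [], rfl⟩, hncol⟩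
  obtain ⟨p₀, hp₀⟩ := hconn
  exact ⟨(key p₀ hp₀).1, fun p hp => (key p hp).2⟩

end CausalGraph
end
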